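/- arXiv:2409.06142 — 3 statements merged into one kernel-verified Lean document; each statement's English description precedes it below -/
import Mathlib

section
/- Bound on the KL divergence between two posterior distributions with common prior: for probability mass functions over finite X of the form p_i(x) = ℓ_i(x) p(x) / Z_i with Z_i = Σ_x ℓ_i(x) p(x), where 0 < ℓ_i(x) ≤ 1, it holds that D_KL(p₁‖p₂) ≤ E_{p₁}[(ℓ₁(x) − ℓ₂(x))/ℓ₂(x)] + E_p[ℓ₂(x) − ℓ₁(x)]/E_p[ℓ₁(x)]. -/
/-!
Since both posteriors share the prior, `p₁ x / p₂ x = (ℓ₁ x / ℓ₂ x) · (Z₂ / Z₁)`, so the divergence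
splits as `E_{p₁}[log (ℓ₁ / ℓ₂)] + log (Z₂ / Z₁)`. Both logarithms are bounded by `log (a / b) ≤ (a - b) / b`,
and `Z₂ - Z₁ = E_p[ℓ₂ - ℓ₁]`, `Z₁ = E_p[ℓ₁]`.
-/

open Finset Real

lemma log_div_le_sub_div {a b : ℝ} (ha : 0 < a) (hb : 0 < b) : log (a / b) ≤ (a - b) / b :=
  calc log (a / b) ≤ a / b - 1 := log_le_sub_one_of_pos (div_pos ha hb)
    _ = (a - b) / b := by rw [sub_div, div_self hb.ne']

section

variable {X : Type*} [Fintype X]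

lemma sum_mul_log_mul_const {q f : X → ℝ} {c : ℝ} (hq : ∑ x, q x = 1) (hf : ∀ x, 0 < f x)
    (hc : 0 < c) : ∑ x, q x * log (f x * c) = ∑ x, q x * log (f x) + log c := by
  simp only [fun x => log_mul (hf x).ne' hc.ne', mul_add, sum_add_distrib, ← sum_mul, hq, one_mul]

lemma sum_div_sum_self {w : X → ℝ} (hw : ∑ x, w x ≠ 0) : ∑ x, w x / ∑ y, w y = 1 := by
  rw [← sum_div, div_self hw]

end

lemma posterior_div_posterior {w ℓ₁ ℓ₂ Z₁ Z₂ : ℝ} (hw : w ≠ 0) (hℓ₂ : ℓ₂ ≠ 0) (hZ₁ : Z₁ ≠ 0)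
    (hZ₂ : Z₂ ≠ 0) : ℓ₁ * w / Z₁ / (ℓ₂ * w / Z₂) = ℓ₁ / ℓ₂ * (Z₂ / Z₁) := by
  field_simp

theorem kl_posterior_bound_general {X : Type*} [Fintype X] [Nonempty X]
    (p ℓ₁ ℓ₂ : X → ℝ) (hp : ∀ x, 0 < p x)
    (hℓ₁ : ∀ x, 0 < ℓ₁ x ∧ ℓ₁ x ≤ 1) (hℓ₂ : ∀ x, 0 < ℓ₂ x ∧ ℓ₂ x ≤ 1)
    (Z₁ Z₂ : ℝ) (hZ₁ : Z₁ = ∑ x, ℓ₁ x * p x) (hZ₂ : Z₂ = ∑ x, ℓ₂ x * p x)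
    (p₁ p₂ : X → ℝ) (hp₁ : ∀ x, p₁ x = ℓ₁ x * p x / Z₁) (hp₂ : ∀ x, p₂ x = ℓ₂ x * p x / Z₂) :
    ∑ x, p₁ x * Real.log (p₁ x / p₂ x) ≤
      (∑ x, p₁ x * ((ℓ₁ x - ℓ₂ x) / ℓ₂ x)) +
        (∑ x, p x * (ℓ₂ x - ℓ₁ x)) / (∑ x, p x * ℓ₁ x) := by
  have hZ₁pos : 0 < Z₁ := hZ₁ ▸ sum_pos (fun x _ => mul_pos (hℓ₁ x).1 (hp x)) univ_nonempty
  have hZ₂pos : 0 < Z₂ := hZ₂ ▸ sum_pos (fun x _ => mul_pos (hℓ₂ x).1 (hp x)) univ_nonempty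
  have hp₁sum : ∑ x, p₁ x = 1 := by
    simp only [hp₁, hZ₁]
    exact sum_div_sum_self (hZ₁ ▸ hZ₁pos.ne')
  have hratio (x : X) : p₁ x / p₂ x = ℓ₁ x / ℓ₂ x * (Z₂ / Z₁) := by
    rw [hp₁, hp₂]
    exact posterior_div_posterior (hp x).ne' (hℓ₂ x).1.ne' hZ₁pos.ne' hZ₂pos.ne'
  have hevidence₁ : ∑ x, p x * ℓ₁ x = Z₁ := by simp only [hZ₁, mul_comm]
  have hevidence_sub : ∑ x, p x * (ℓ₂ x - ℓ₁ x) = Z₂ - Z₁ := by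
    simp only [hZ₁, hZ₂, ← sum_sub_distrib, mul_sub, mul_comm]
  rw [hevidence₁, hevidence_sub]
  simp only [hratio]
  rw [sum_mul_log_mul_const hp₁sum (fun x => div_pos (hℓ₁ x).1 (hℓ₂ x).1) (div_pos hZ₂pos hZ₁pos)]
  gcongr with x
  · exact (hp₁ x ▸ div_pos (mul_pos (hℓ₁ x).1 (hp x)) hZ₁pos).le
  · exact log_div_le_sub_div (hℓ₁ x).1 (hℓ₂ x).1
  · exact log_div_le_sub_div hZ₂pos hZ₁pos

/-- KL divergence bound between two posteriors sharing a common prior. -/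
theorem kl_posterior_bound {X : Type*} [Fintype X] [Nonempty X]
    (p ℓ₁ ℓ₂ : X → ℝ) (hp : ∀ x, 0 < p x) (hpsum : ∑ x, p x = 1)
    (hℓ₁ : ∀ x, 0 < ℓ₁ x ∧ ℓ₁ x ≤ 1) (hℓ₂ : ∀ x, 0 < ℓ₂ x ∧ ℓ₂ x ≤ 1)
    (Z₁ Z₂ : ℝ) (hZ₁ : Z₁ = ∑ x, ℓ₁ x * p x) (hZ₂ : Z₂ = ∑ x, ℓ₂ x * p x)
    (p₁ p₂ : X → ℝ) (hp₁ : ∀ x, p₁ x = ℓ₁ x * p x / Z₁) (hp₂ : ∀ x, p₂ x = ℓ₂ x * p x / Z₂) :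
    ∑ x, p₁ x * Real.log (p₁ x / p₂ x) ≤
      (∑ x, p₁ x * ((ℓ₁ x - ℓ₂ x) / ℓ₂ x)) +
        (∑ x, p x * (ℓ₂ x - ℓ₁ x)) / (∑ x, p x * ℓ₁ x) :=
  kl_posterior_bound_general p ℓ₁ ℓ₂ hp hℓ₁ hℓ₂ Z₁ Z₂ hZ₁ hZ₂ p₁ p₂ hp₁ hp₂
end

section
/- Probability-of-improvement approximation error bound: for μ, f, τ ∈ ℝ, σ ≥ 0 and σ_ε > 0, |Φ((μ − τ)/√(σ² + σ²_ε)) − Φ((f − τ)/σ_ε)| ≤ (σ_ε |μ − f| + σ (|f| + |τ|)) / (σ²_ε √(2π)). -/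
/-- The standard normal cumulative distribution function. -/
noncomputable def stdNormalCDF (t : ℝ) : ℝ :=
  ∫ s in Set.Iic t, (Real.sqrt (2 * Real.pi))⁻¹ * Real.exp (-(s ^ 2) / 2)

/-! Write `s = √(σ² + σε²)`. The two arguments of `Φ` differ by
`(σε (μ - f) + (σε - s) (f - τ)) / (s σε)`, and `σε ≤ s ≤ σ + σε` bounds this by
`(σε |μ - f| + σ (|f| + |τ|)) / σε²`. Since the standard normal density is at most `1/√(2π)`,
`Φ` is `1/√(2π)`-Lipschitz. -/

open MeasureTheory

lemma norm_integral_Iic_sub_integral_Iic_le {E : Type*} [NormedAddCommGroup E] [NormedSpace ℝ E]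
    {g : ℝ → E} (hg : Integrable g) {C : ℝ} (hC : ∀ x, ‖g x‖ ≤ C) (a b : ℝ) :
    ‖(∫ x in Set.Iic a, g x) - ∫ x in Set.Iic b, g x‖ ≤ C * |a - b| := by
  rw [intervalIntegral.integral_Iic_sub_Iic hg.integrableOn hg.integrableOn]
  exact intervalIntegral.norm_integral_le_of_norm_le_const fun x _ ↦ hC x

lemma integrable_stdNormal_density :
    Integrable fun s : ℝ ↦ (Real.sqrt (2 * Real.pi))⁻¹ * Real.exp (-(s ^ 2) / 2) := by
  have h := (integrable_exp_neg_mul_sq (b := 1 / 2) (by norm_num)).const_mul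
    (Real.sqrt (2 * Real.pi))⁻¹
  convert h using 4
  ring

lemma stdNormal_density_le (s : ℝ) :
    ‖(Real.sqrt (2 * Real.pi))⁻¹ * Real.exp (-(s ^ 2) / 2)‖ ≤ (Real.sqrt (2 * Real.pi))⁻¹ := by
  have hexp : Real.exp (-(s ^ 2) / 2) ≤ 1 := Real.exp_le_one_iff.mpr (by nlinarith [sq_nonneg s])
  rw [Real.norm_of_nonneg (by positivity)]
  exact mul_le_of_le_one_right (by positivity) hexp

lemma abs_stdNormalCDF_sub_le (a b : ℝ) :
    |stdNormalCDF a - stdNormalCDF b| ≤ |a - b| / Real.sqrt (2 * Real.pi) := by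
  rw [div_eq_inv_mul]
  exact norm_integral_Iic_sub_integral_Iic_le integrable_stdNormal_density stdNormal_density_le a b

lemma abs_div_sub_div_le {a b s t d : ℝ} (ht : 0 < t) (hts : t ≤ s) (hst : s - t ≤ d) :
    |a / s - b / t| ≤ (t * |a - b| + d * |b|) / t ^ 2 := by
  have hs : 0 < s := ht.trans_le hts
  have hd : 0 ≤ d := (sub_nonneg.mpr hts).trans hst
  have hsplit : a / s - b / t = (t * (a - b) + (t - s) * b) / (s * t) := by
    field_simp
    ring
  have hnum : |t * (a - b) + (t - s) * b| ≤ t * |a - b| + d * |b| :=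
    calc |t * (a - b) + (t - s) * b| ≤ |t * (a - b)| + |(t - s) * b| := abs_add_le _ _
      _ = t * |a - b| + |s - t| * |b| := by rw [abs_mul, abs_mul, abs_of_pos ht, abs_sub_comm t s]
      _ ≤ t * |a - b| + d * |b| := by
          gcongr
          rwa [abs_of_nonneg (sub_nonneg.mpr hts)]
  rw [hsplit, abs_div, abs_of_pos (mul_pos hs ht), sq]
  calc |t * (a - b) + (t - s) * b| / (s * t) ≤ (t * |a - b| + d * |b|) / (s * t) := by gcongr
    _ ≤ (t * |a - b| + d * |b|) / (t * t) := by gcongr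

lemma le_sqrt_sq_add_sq (x y : ℝ) : y ≤ Real.sqrt (x ^ 2 + y ^ 2) :=
  Real.le_sqrt_of_sq_le (le_add_of_nonneg_left (sq_nonneg x))

lemma sqrt_sq_add_sq_le_add {x y : ℝ} (hx : 0 ≤ x) (hy : 0 ≤ y) :
    Real.sqrt (x ^ 2 + y ^ 2) ≤ x + y :=
  (Real.sqrt_le_left (add_nonneg hx hy)).mpr (by nlinarith)

/-- Probability-of-improvement approximation error bound. -/
theorem pi_approx_error (μ f τ σ σε : ℝ) (hσ : 0 ≤ σ) (hσε : 0 < σε) :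
    |stdNormalCDF ((μ - τ) / Real.sqrt (σ ^ 2 + σε ^ 2)) - stdNormalCDF ((f - τ) / σε)| ≤
      (σε * |μ - f| + σ * (|f| + |τ|)) / (σε ^ 2 * Real.sqrt (2 * Real.pi)) := by
  have hargs : |(μ - τ) / Real.sqrt (σ ^ 2 + σε ^ 2) - (f - τ) / σε| ≤
      (σε * |μ - f| + σ * |f - τ|) / σε ^ 2 := by
    have h := abs_div_sub_div_le (a := μ - τ) (b := f - τ) hσε (le_sqrt_sq_add_sq σ σε)
      (sub_le_iff_le_add.mpr (sqrt_sq_add_sq_le_add hσ hσε.le))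
    rwa [sub_sub_sub_cancel_right] at h
  calc _ ≤ |(μ - τ) / Real.sqrt (σ ^ 2 + σε ^ 2) - (f - τ) / σε| / Real.sqrt (2 * Real.pi) :=
        abs_stdNormalCDF_sub_le _ _
    _ ≤ (σε * |μ - f| + σ * |f - τ|) / σε ^ 2 / Real.sqrt (2 * Real.pi) := by gcongr
    _ ≤ (σε * |μ - f| + σ * (|f| + |τ|)) / σε ^ 2 / Real.sqrt (2 * Real.pi) := by
        gcongr
        exact abs_sub _ _
    _ = _ := div_div _ _ _
end

section
/- For a symmetric positive-definite matrix K and scalars ν, s > 0, the implicit regularization matrix Σ := K(e^{νsK} − I)⁻¹ satisfies Σ ⪰ (e^{-νs λ_max(K)}/(νs)) I, where λ_max(K) is the largest eigenvalue of K; in particular, if ν λ_max(K) ≤ 1 then Σ ⪰ (e^{-s}/(νs)) I. -/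
/-!
With `t = νs`, the continuous functional calculus turns `K (e^{tK} - 1)⁻¹ - c` into the image
of `K` under `x ↦ x / (e^{tx} - 1) - c`, so it is positive semidefinite as soon as this scalar
function is nonnegative on the spectrum of `K`. That spectrum lies in `(0, lam]`: positivity
comes from `K ≻ 0`, and the bound on the Rayleigh quotient says `K ⪯ lam`. On `(0, lam]`,
`x / (e^{tx} - 1) = x e^{-tx} / (1 - e^{-tx}) ≥ e^{-tx} / t ≥ e^{-t lam} / t`
since `1 - e^{-a} ≤ a`.
-/

open Matrix

theorem Real.exp_neg_mul_div_le_div_exp_mul_sub_one {t x lam : ℝ} (ht : 0 < t) (hx : 0 < x)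
    (hxlam : x ≤ lam) : Real.exp (-(t * lam)) / t ≤ x / (Real.exp (t * x) - 1) := by
  have htx : 0 < t * x := mul_pos ht hx
  have hden : 0 < Real.exp (t * x) - 1 := sub_pos.mpr (Real.one_lt_exp_iff.mpr htx)
  calc Real.exp (-(t * lam)) / t
      ≤ Real.exp (-(t * x)) / t := by gcongr
    _ = x * Real.exp (-(t * x)) / (t * x) := by field_simp
    _ ≤ x / (Real.exp (t * x) - 1) := by
      rw [div_le_div_iff₀ htx hden, mul_assoc, mul_sub, mul_one, ← Real.exp_add, neg_add_cancel,
        Real.exp_zero]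
      gcongr
      linarith [Real.add_one_le_exp (-(t * x))]

open NormedSpace

section
variable {A : Type*} [NormedRing A] [StarRing A] [NormedAlgebra ℝ A] [StarModule ℝ A]
  [ContinuousFunctionalCalculus ℝ A IsSelfAdjoint]

theorem mul_inverse_exp_smul_sub_one_eq_cfc {a : A} (ha : IsSelfAdjoint a) {t : ℝ} (ht : t ≠ 0)
    (ha0 : 0 ∉ spectrum ℝ a) :
    a * Ring.inverse (exp (t • a) - 1) = cfc (fun x => x / (Real.exp (t * x) - 1)) a := by
  have hne : ∀ x ∈ spectrum ℝ a, Real.exp (t * x) - 1 ≠ 0 := by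
    intro x hx
    rw [sub_ne_zero, Ne, Real.exp_eq_one_iff]
    exact mul_ne_zero ht (ne_of_mem_of_not_mem hx ha0)
  have hexp : exp (t • a) - 1 = cfc (fun x => Real.exp (t * x) - 1) a := by
    rw [cfc_sub .., cfc_const_one ℝ a, ← CFC.real_exp_eq_normedSpace_exp (.smul (.all t) ha),
      ← cfc_comp_smul ..]
    rfl
  rw [cfc_map_div _ _ a hne, cfc_id' ℝ a, hexp]

theorem algebraMap_le_mul_inverse_exp_smul_sub_one [PartialOrder A] [StarOrderedRing A]
    {a : A} (ha : IsSelfAdjoint a) {t lam c : ℝ} (ht : 0 < t)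
    (hpos : ∀ x ∈ spectrum ℝ a, 0 < x) (hle : ∀ x ∈ spectrum ℝ a, x ≤ lam)
    (hc : c ≤ Real.exp (-(t * lam)) / t) :
    algebraMap ℝ A c ≤ a * Ring.inverse (exp (t • a) - 1) := by
  rw [mul_inverse_exp_smul_sub_one_eq_cfc ha ht.ne' fun h0 => (hpos 0 h0).false]
  have hden : ∀ x ∈ spectrum ℝ a, Real.exp (t * x) - 1 ≠ 0 := fun x hx =>
    (sub_pos.mpr (Real.one_lt_exp_iff.mpr (mul_pos ht (hpos x hx)))).ne'
  refine algebraMap_le_cfc _ c a (fun x hx => hc.trans ?_)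
    (continuousOn_id.div (by fun_prop) hden)
  exact Real.exp_neg_mul_div_le_div_exp_mul_sub_one ht (hpos x hx) (hle x hx)

end

namespace Matrix

variable {m : Type*} [Fintype m] [DecidableEq m]

theorem IsHermitian.posSemidef_smul_one_sub_of_dotProduct_mulVec_le {K : Matrix m m ℝ}
    (hK : K.IsHermitian) {lam : ℝ}
    (hlam : ∀ x : m → ℝ, x ⬝ᵥ (K *ᵥ x) ≤ lam * (x ⬝ᵥ x)) : (lam • 1 - K).PosSemidef := by
  refine .of_dotProduct_mulVec_nonneg ((isHermitian_one.smul (.all lam)).sub hK) fun x => ?_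
  simp only [star_trivial, sub_mulVec, smul_mulVec, one_mulVec, dotProduct_sub,
    dotProduct_smul, smul_eq_mul, sub_nonneg]
  exact hlam x

open scoped Matrix.Norms.L2Operator MatrixOrder

theorem IsHermitian.spectrum_le_of_dotProduct_mulVec_le {K : Matrix m m ℝ}
    (hK : K.IsHermitian) {lam : ℝ}
    (hlam : ∀ x : m → ℝ, x ⬝ᵥ (K *ᵥ x) ≤ lam * (x ⬝ᵥ x)) : ∀ μ ∈ spectrum ℝ K, μ ≤ lam := by
  rw [← le_algebraMap_iff_spectrum_le hK.isSelfAdjoint, le_iff, Algebra.algebraMap_eq_smul_one]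
  exact hK.posSemidef_smul_one_sub_of_dotProduct_mulVec_le hlam

theorem PosDef.posSemidef_mul_inv_exp_smul_sub_one_sub {K : Matrix m m ℝ} (hK : K.PosDef)
    {t lam c : ℝ} (ht : 0 < t) (hlam : ∀ x : m → ℝ, x ⬝ᵥ (K *ᵥ x) ≤ lam * (x ⬝ᵥ x))
    (hc : c ≤ Real.exp (-(t * lam)) / t) :
    (K * (exp (t • K) - 1)⁻¹ - c • 1).PosSemidef := by
  rw [← le_iff, ← Algebra.algebraMap_eq_smul_one, nonsing_inv_eq_ringInverse]
  exact algebraMap_le_mul_inverse_exp_smul_sub_one hK.1.isSelfAdjoint ht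
    ((StarOrderedRing.isStrictlyPositive_iff_spectrum_pos K).mp hK.isStrictlyPositive)
    (hK.1.spectrum_le_of_dotProduct_mulVec_le hlam) hc

end Matrix

/-- Lower bound on the implicit regularization matrix Σ = K(e^{νsK} − I)⁻¹:
Σ ⪰ (e^{-νs·λmax}/(νs)) I, and if ν·λmax ≤ 1 then Σ ⪰ (e^{-s}/(νs)) I.
Here `lam` is an upper bound on the Rayleigh quotient of K (i.e. the largest eigenvalue). -/
theorem implicit_reg_lower (n : ℕ) (K : Matrix (Fin n) (Fin n) ℝ) (hK : K.PosDef)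
    (ν s lam : ℝ) (hν : 0 < ν) (hs : 0 < s)
    (hlam : ∀ x : Fin n → ℝ, x ⬝ᵥ (K *ᵥ x) ≤ lam * (x ⬝ᵥ x)) :
    ((K * (NormedSpace.exp ((ν * s) • K) - 1)⁻¹)
        - (Real.exp (-(ν * s * lam)) / (ν * s)) • (1 : Matrix (Fin n) (Fin n) ℝ)).PosSemidef ∧
    (ν * lam ≤ 1 →
      ((K * (NormedSpace.exp ((ν * s) • K) - 1)⁻¹)
        - (Real.exp (-s) / (ν * s)) • (1 : Matrix (Fin n) (Fin n) ℝ)).PosSemidef) := by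
  have hνs : 0 < ν * s := mul_pos hν hs
  refine ⟨hK.posSemidef_mul_inv_exp_smul_sub_one_sub hνs hlam le_rfl, fun hνlam => ?_⟩
  refine hK.posSemidef_mul_inv_exp_smul_sub_one_sub hνs hlam ?_
  have hνslam : ν * s * lam ≤ s := by nlinarith
  gcongr
end
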